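/- Let 0 < γ < β and x > 0. Then sup{ m − x·m·(−1 + β/(γ − m)) : γ − √(βγ) < m < γ } = (√(γ(1 + x)) − √(βx))². -/

import Mathlib

/-!
Substituting `v = γ - m`, the objective becomes
`m - x ψ(m) = γ(1 + x) + βx - ((1 + x) v + xβγ / v)`, so the supremum is
`γ(1 + x) + βx` minus the minimum of `(1 + x) v + xβγ / v` over `0 < v < √(βγ)`.
By AM-GM that minimum is `2√((1 + x)xβγ) = 2√(γ(1 + x))√(βx)`, attained at
`v = √((1 + x)xβγ) / (1 + x)`, which lies below `√(βγ)` because `x < 1 + x`.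
-/

open Real Set

lemma two_sqrt_mul_le_mul_add_div {a c v : ℝ} (ha : 0 ≤ a) (hc : 0 ≤ c) (hv : 0 < v) :
    2 * √(a * c) ≤ a * v + c / v := by
  have hprod : √(a * v) * √(c / v) = √(a * c) := by
    rw [← sqrt_mul (by positivity)]
    congr 1
    field_simp
  calc 2 * √(a * c) = 2 * √(a * v) * √(c / v) := by rw [mul_assoc, hprod]
    _ ≤ √(a * v) ^ 2 + √(c / v) ^ 2 := two_mul_le_add_sq _ _
    _ = a * v + c / v := by rw [sq_sqrt (by positivity), sq_sqrt (by positivity)]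

lemma mul_add_div_eq_two_sqrt_mul {a c : ℝ} (ha : 0 < a) (hc : 0 ≤ c) :
    a * (√(a * c) / a) + c / (√(a * c) / a) = 2 * √(a * c) := by
  rcases hc.eq_or_lt with rfl | hc
  · simp
  have hs : 0 < √(a * c) := sqrt_pos.2 (by positivity)
  have hsq : √(a * c) ^ 2 = a * c := sq_sqrt (by positivity)
  field_simp
  linear_combination -hsq

lemma add_sub_two_sqrt_mul {p q : ℝ} (hp : 0 ≤ p) (hq : 0 ≤ q) :
    p + q - 2 * √(p * q) = (√p - √q) ^ 2 := by
  rw [sqrt_mul hp, sub_sq, sq_sqrt hp, sq_sqrt hq]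
  ring

lemma sqrt_mul_div_lt_sqrt {a c d : ℝ} (ha : 0 < a) (hc : 0 ≤ c) (hcd : c < a * d) :
    √(a * c) / a < √d := by
  rw [div_lt_iff₀ ha]
  calc √(a * c) < √(a ^ 2 * d) := sqrt_lt_sqrt (by positivity) (by nlinarith)
    _ = √d * a := by rw [sqrt_mul (sq_nonneg a), sqrt_sq ha.le, mul_comm]

namespace PoissonNegativeDrift

/-- The Laplace exponent `ψ` of `-t + Pois(β, γ)_t`. -/
noncomputable def laplaceExponent (β γ m : ℝ) : ℝ := m * (-1 + β / (γ - m))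

lemma sub_mul_laplaceExponent_eq {β γ m : ℝ} (x : ℝ) (hm : m ≠ γ) :
    m - x * laplaceExponent β γ m
      = γ * (1 + x) + β * x - ((1 + x) * (γ - m) + x * β * γ / (γ - m)) := by
  have : γ - m ≠ 0 := sub_ne_zero.2 hm.symm
  unfold laplaceExponent
  field_simp
  ring

lemma isGreatest_sub_mul_laplaceExponent {β γ x : ℝ} (hγ : 0 < γ) (hβ : 0 < β) (hx : 0 < x) :
    IsGreatest {y | ∃ m ∈ Ioo (γ - √(β * γ)) γ, y = m - x * laplaceExponent β γ m}
      ((√(γ * (1 + x)) - √(β * x)) ^ 2) := by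
  have h1x : 0 < 1 + x := by positivity
  have hc : 0 ≤ x * β * γ := by positivity
  have hmax : γ * (1 + x) + β * x - 2 * √((1 + x) * (x * β * γ))
      = (√(γ * (1 + x)) - √(β * x)) ^ 2 := by
    rw [← add_sub_two_sqrt_mul (by positivity) (by positivity)]
    ring_nf
  refine ⟨?_, ?_⟩
  · set v := √((1 + x) * (x * β * γ)) / (1 + x)
    have hv : 0 < v := by positivity
    have hvr : v < √(β * γ) := sqrt_mul_div_lt_sqrt h1x hc (by nlinarith [mul_pos hβ hγ])
    refine ⟨γ - v, ⟨by linarith, by linarith⟩, ?_⟩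
    rw [sub_mul_laplaceExponent_eq x (by linarith), sub_sub_cancel,
      mul_add_div_eq_two_sqrt_mul h1x hc, hmax]
  · rintro y ⟨m, ⟨-, hm⟩, rfl⟩
    rw [sub_mul_laplaceExponent_eq x hm.ne, ← hmax]
    have := two_sqrt_mul_le_mul_add_div h1x.le hc (sub_pos.2 hm)
    linarith

end PoissonNegativeDrift

/-- For `0 < γ < β` and `x > 0`, the rate function of the clock of the
pssMp associated with `ξ_t = -t + Pois(β,γ)_t` is
`sup {m - x·m·(-1 + β/(γ-m)) : γ - √(βγ) < m < γ} = (√(γ(1+x)) - √(βx))²`. -/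
theorem poisson_negative_drift_clock_rate_function
    (β γ x : ℝ) (hγ : 0 < γ) (hγβ : γ < β) (hx : 0 < x) :
    sSup {y : ℝ | ∃ m ∈ Set.Ioo (γ - Real.sqrt (β * γ)) γ,
        y = m - x * (m * (-1 + β / (γ - m)))}
      = (Real.sqrt (γ * (1 + x)) - Real.sqrt (β * x)) ^ 2 := by
  exact (PoissonNegativeDrift.isGreatest_sub_mul_laplaceExponent hγ (hγ.trans hγβ) hx).csSup_eq
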